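/- arXiv:1408.5165 — 3 statements merged into one kernel-verified Lean document; each statement's English description precedes it below -/
import Mathlib

section
/- For all vector fields v in [H^1(Ω)]^d on a bounded Lipschitz domain Ω ⊂ ℝ^d, there exists a constant C depending only on Ω such that ‖v‖_{H^1(Ω)} ≤ C (‖ε(v)‖_{L^2(Ω)} + ‖v‖_{L^2(∂Ω)}), where ε(v) = (∇v + ∇v^T)/2 is the symmetric gradient and the boundary term is the L^2 norm of the trace of v on ∂Ω. -/
open Filter Topology

/-- Boundary-trace Korn inequality: for vector fields `v` in `H¹(Ω)` on a bounded
Lipschitz domain, `‖v‖_{H¹} ≤ C (‖ε(v)‖_{L²} + ‖v‖_{L²(∂Ω)})`.  Abstract setting: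
`V` is the `H¹` space with its norm, `eps` the symmetric gradient, `emb` the
(compact) embedding into `L²`, `tr` the trace operator.  Hypotheses: Korn's
second inequality, compactness of the embedding, and the fact (Korn I +
Poincaré) that trace-free fields are controlled by their symmetric gradient. -/
theorem stmt0
    {V L B W : Type*} [NormedAddCommGroup V] [NormedSpace ℝ V] [CompleteSpace V]
    [NormedAddCommGroup L] [NormedSpace ℝ L]
    [NormedAddCommGroup B] [NormedSpace ℝ B]
    [NormedAddCommGroup W] [NormedSpace ℝ W]
    (eps : V →L[ℝ] W) (emb : V →L[ℝ] L) (tr : V →L[ℝ] B)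
    (C2 : ℝ) (hKorn2 : ∀ v : V, ‖v‖ ≤ C2 * (‖eps v‖ + ‖emb v‖))
    (hcompact : ∀ u : ℕ → V, (∃ M : ℝ, ∀ n, ‖u n‖ ≤ M) →
      ∃ φ : ℕ → ℕ, StrictMono φ ∧ CauchySeq (fun n => emb (u (φ n))))
    (C1 : ℝ) (hker : ∀ v : V, tr v = 0 → ‖v‖ ≤ C1 * ‖eps v‖) :
    ∃ C : ℝ, 0 < C ∧ ∀ v : V, ‖v‖ ≤ C * (‖eps v‖ + ‖tr v‖) := by
  by_contra h
  push_neg at h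
  have hv : ∀ n : ℕ, ∃ v : V, ((n : ℝ) + 1) * (‖eps v‖ + ‖tr v‖) < ‖v‖ := by
    intro n
    obtain ⟨v, hv⟩ := h ((n : ℝ) + 1) (by positivity)
    exact ⟨v, hv⟩
  choose v hvlt using hv
  have hvne : ∀ n, v n ≠ 0 := by
    intro n hn
    have := hvlt n
    simp [hn] at this
  set u : ℕ → V := fun n => ‖v n‖⁻¹ • v n with hu
  have hun : ∀ n, ‖u n‖ = 1 := by
    intro n
    simp [hu, norm_smul, inv_mul_cancel₀ (norm_ne_zero_iff.2 (hvne n))]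
  have hsmall : ∀ n, ‖eps (u n)‖ + ‖tr (u n)‖ < 1 / ((n : ℝ) + 1) := by
    intro n
    have hpos : (0 : ℝ) < ‖v n‖ := norm_pos_iff.2 (hvne n)
    have heq : ‖eps (u n)‖ + ‖tr (u n)‖ = (‖eps (v n)‖ + ‖tr (v n)‖) / ‖v n‖ := by
      simp [hu, map_smul, norm_smul, abs_of_nonneg hpos.le, mul_add, div_eq_inv_mul]
    rw [heq, div_lt_div_iff₀ hpos (by positivity : (0:ℝ) < (n : ℝ) + 1)]
    have := hvlt n
    nlinarith
  -- C2 is positive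
  have hC2pos : 0 < C2 := by
    have h1 := hKorn2 (u 0)
    rw [hun 0] at h1
    nlinarith [norm_nonneg (eps (u 0)), norm_nonneg (emb (u 0))]
  -- eps ∘ u tends to 0
  have hepslim : Tendsto (fun n => eps (u n)) atTop (𝓝 0) := by
    refine squeeze_zero_norm (a := fun n : ℕ => 1 / ((n : ℝ) + 1)) ?_ tendsto_one_div_add_atTop_nhds_zero_nat
    · intro n
      have := hsmall n
      have := norm_nonneg (tr (u n))
      linarith
  have htrlim : Tendsto (fun n => tr (u n)) atTop (𝓝 0) := by
    refine squeeze_zero_norm (a := fun n : ℕ => 1 / ((n : ℝ) + 1)) ?_ tendsto_one_div_add_atTop_nhds_zero_nat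
    · intro n
      have := hsmall n
      have := norm_nonneg (eps (u n))
      linarith
  obtain ⟨φ, hφ, hembC⟩ := hcompact u ⟨1, fun n => (hun n).le⟩
  have hφt : Tendsto φ atTop atTop := hφ.tendsto_atTop
  set a : ℕ → V := fun n => u (φ n) with ha
  have hepsa : Tendsto (fun n => eps (a n)) atTop (𝓝 0) := hepslim.comp hφt
  have htra : Tendsto (fun n => tr (a n)) atTop (𝓝 0) := htrlim.comp hφt
  have hepsC : CauchySeq (fun n => eps (a n)) := hepsa.cauchySeq
  -- a is Cauchy in V
  have haC : CauchySeq a := by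
    rw [Metric.cauchySeq_iff]
    intro ε hε
    have hε2 : 0 < ε / (2 * C2) := by positivity
    obtain ⟨N1, hN1⟩ := Metric.cauchySeq_iff.1 hepsC (ε / (2 * C2)) hε2
    obtain ⟨N2, hN2⟩ := Metric.cauchySeq_iff.1 hembC (ε / (2 * C2)) hε2
    refine ⟨max N1 N2, fun m hm n hn => ?_⟩
    have h1 := hN1 m (le_of_max_le_left hm) n (le_of_max_le_left hn)
    have h2 := hN2 m (le_of_max_le_right hm) n (le_of_max_le_right hn)
    rw [dist_eq_norm] at h1 h2 ⊢
    have hk := hKorn2 (a m - a n)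
    rw [map_sub, map_sub] at hk
    calc ‖a m - a n‖ ≤ C2 * (‖eps (a m) - eps (a n)‖ + ‖emb (a m) - emb (a n)‖) := hk
      _ < C2 * (ε / (2 * C2) + ε / (2 * C2)) := by
          apply mul_lt_mul_of_pos_left _ hC2pos
          linarith
      _ = ε := by field_simp; ring
  obtain ⟨w, hw⟩ := cauchySeq_tendsto_of_complete haC
  have hnw : ‖w‖ = 1 := by
    have h1 : Tendsto (fun n => ‖a n‖) atTop (𝓝 ‖w‖) := hw.norm
    have h2 : Tendsto (fun n => ‖a n‖) atTop (𝓝 1) := by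
      simpa [ha, hun] using tendsto_const_nhds (x := (1 : ℝ)) (f := atTop (α := ℕ))
    exact tendsto_nhds_unique h1 h2
  have hepsw : eps w = 0 :=
    tendsto_nhds_unique ((eps.continuous.tendsto w).comp hw) hepsa
  have htrw : tr w = 0 :=
    tendsto_nhds_unique ((tr.continuous.tendsto w).comp hw) htra
  have := hker w htrw
  rw [hepsw, hnw] at this
  simp at this
  linarith
end

section
/- Let H be a real Hilbert space, V_h a finite-dimensional subspace, s a symmetric positive semidefinite bilinear form on V_h, and Π the stabilized projection defined by (Πu, v)_H + s(Πu, v) = (u, v)_H. Then for any u ∈ H and any w_h ∈ V_h: ‖Πu − w_h‖_H^2 + s(Πu − w_h, Πu − w_h) ≤ (‖u − w_h‖_H + s(w_h, w_h)^{1/2}) (‖Πu − w_h‖_H^2 + s(Πu − w_h, Πu − w_h))^{1/2}. -/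
open RealInnerProductSpace

/-- Cauchy–Schwarz for a symmetric positive semidefinite bilinear form on a
submodule. -/
lemma cs_semidef {H : Type*} [NormedAddCommGroup H] [InnerProductSpace ℝ H]
    (Vh : Submodule ℝ H) (s : H →ₗ[ℝ] H →ₗ[ℝ] ℝ)
    (hsymm : ∀ x ∈ Vh, ∀ y ∈ Vh, s x y = s y x)
    (hpsd : ∀ x ∈ Vh, 0 ≤ s x x)
    {x y : H} (hx : x ∈ Vh) (hy : y ∈ Vh) :
    (s x y) ^ 2 ≤ s x x * s y y := by
  have h : ∀ t : ℝ, 0 ≤ s y y * (t * t) + (2 * s x y) * t + s x x := by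
    intro t
    have hmem : x + t • y ∈ Vh := Vh.add_mem hx (Vh.smul_mem t hy)
    have := hpsd _ hmem
    have hexp : s (x + t • y) (x + t • y)
        = s y y * (t * t) + (2 * s x y) * t + s x x := by
      have hs := hsymm y hy x hx
      simp only [map_add, map_smul, LinearMap.add_apply, LinearMap.smul_apply,
        smul_eq_mul]
      rw [hs]; ring
    linarith [hexp ▸ this]
  have hd := discrim_le_zero h
  rw [discrim] at hd
  nlinarith [hd]

/-- Key abstract estimate for the stabilized projection: for any `u ∈ H` and
`w_h ∈ V_h`,
`‖Πu − w_h‖² + s(Πu − w_h, Πu − w_h)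
  ≤ (‖u − w_h‖ + s(w_h, w_h)^{1/2}) (‖Πu − w_h‖² + s(Πu − w_h, Πu − w_h))^{1/2}`. -/
theorem stmt8 {H : Type*} [NormedAddCommGroup H] [InnerProductSpace ℝ H]
    [CompleteSpace H]
    (Vh : Submodule ℝ H) [FiniteDimensional ℝ Vh]
    (s : H →ₗ[ℝ] H →ₗ[ℝ] ℝ)
    (hsymm : ∀ x ∈ Vh, ∀ y ∈ Vh, s x y = s y x)
    (hpsd : ∀ x ∈ Vh, 0 ≤ s x x)
    (u p : H) (hp : p ∈ Vh)
    (hdef : ∀ v ∈ Vh, ⟪p, v⟫ + s p v = ⟪u, v⟫)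
    (w : H) (hw : w ∈ Vh) :
    ‖p - w‖ ^ 2 + s (p - w) (p - w) ≤
      (‖u - w‖ + Real.sqrt (s w w)) *
        Real.sqrt (‖p - w‖ ^ 2 + s (p - w) (p - w)) := by
  set ξ : H := p - w with hξ
  have hξmem : ξ ∈ Vh := Vh.sub_mem hp hw
  have hsξ : 0 ≤ s ξ ξ := hpsd ξ hξmem
  set A : ℝ := ‖ξ‖ ^ 2 + s ξ ξ with hA
  have hA0 : 0 ≤ A := by positivity
  -- key identity: A = ⟪u - w, ξ⟫ - s w ξ
  have hid : A = ⟪u - w, ξ⟫ - s w ξ := by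
    have h1 := hdef ξ hξmem
    have h2 : s ξ ξ = s p ξ - s w ξ := by
      simp only [hξ, map_sub, LinearMap.sub_apply]
      ring
    have h3 : ⟪ξ, ξ⟫ = ⟪p, ξ⟫ - ⟪w, ξ⟫ := inner_sub_left _ _ _
    have h4 : ⟪u - w, ξ⟫ = ⟪u, ξ⟫ - ⟪w, ξ⟫ := inner_sub_left _ _ _
    have h5 : ‖ξ‖ ^ 2 = ⟪ξ, ξ⟫ := (real_inner_self_eq_norm_sq ξ).symm
    rw [hA, h5, h3, h2, h4]
    linarith
  -- bounds
  have hb1 : ⟪u - w, ξ⟫ ≤ ‖u - w‖ * ‖ξ‖ := real_inner_le_norm _ _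
  have hcs : (s w ξ) ^ 2 ≤ s w w * s ξ ξ := cs_semidef Vh s hsymm hpsd hw hξmem
  have hsw : 0 ≤ s w w := hpsd w hw
  have hb2 : -s w ξ ≤ Real.sqrt (s w w) * Real.sqrt (s ξ ξ) := by
    have h : |s w ξ| ≤ Real.sqrt (s w w) * Real.sqrt (s ξ ξ) := by
      rw [← Real.sqrt_mul hsw]
      calc |s w ξ| = Real.sqrt ((s w ξ) ^ 2) := (Real.sqrt_sq_eq_abs _).symm
        _ ≤ Real.sqrt (s w w * s ξ ξ) := Real.sqrt_le_sqrt hcs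
    linarith [neg_abs_le (s w ξ)]
  have hnle : ‖ξ‖ ≤ Real.sqrt A := by
    rw [show ‖ξ‖ = Real.sqrt (‖ξ‖ ^ 2) from (Real.sqrt_sq (norm_nonneg ξ)).symm]
    exact Real.sqrt_le_sqrt (by linarith)
  have hsle : Real.sqrt (s ξ ξ) ≤ Real.sqrt A :=
    Real.sqrt_le_sqrt (by nlinarith [sq_nonneg ‖ξ‖])
  have hsqA : 0 ≤ Real.sqrt A := Real.sqrt_nonneg _
  calc A = ⟪u - w, ξ⟫ - s w ξ := hid
    _ ≤ ‖u - w‖ * ‖ξ‖ + Real.sqrt (s w w) * Real.sqrt (s ξ ξ) := by linarith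
    _ ≤ ‖u - w‖ * Real.sqrt A + Real.sqrt (s w w) * Real.sqrt A := by
        have t1 : ‖u - w‖ * ‖ξ‖ ≤ ‖u - w‖ * Real.sqrt A :=
          mul_le_mul_of_nonneg_left hnle (norm_nonneg _)
        have t2 : Real.sqrt (s w w) * Real.sqrt (s ξ ξ)
            ≤ Real.sqrt (s w w) * Real.sqrt A :=
          mul_le_mul_of_nonneg_left hsle (Real.sqrt_nonneg _)
        linarith
    _ = (‖u - w‖ + Real.sqrt (s w w)) * Real.sqrt A := by ring
end

section
/- Let H be a Hilbert space, V_h finite-dimensional, s symmetric positive semidefinite on V_h, and Π the stabilized projection. Then for any u ∈ H and w_h ∈ V_h: ‖u − Πu‖_H ≤ 2‖u − w_h‖_H + s(w_h, w_h)^{1/2}. -/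
open RealInnerProductSpace

/-- Approximation property of the stabilized projection `Π`: for any `u ∈ H` and
any `w_h ∈ V_h`, `‖u − Πu‖ ≤ 2‖u − w_h‖ + s(w_h, w_h)^{1/2}`. -/
theorem stmt9 {H : Type*} [NormedAddCommGroup H] [InnerProductSpace ℝ H]
    [CompleteSpace H]
    (Vh : Submodule ℝ H) [FiniteDimensional ℝ Vh]
    (s : H →ₗ[ℝ] H →ₗ[ℝ] ℝ)
    (hsymm : ∀ x ∈ Vh, ∀ y ∈ Vh, s x y = s y x)
    (hpsd : ∀ x ∈ Vh, 0 ≤ s x x)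
    (u p : H) (hp : p ∈ Vh)
    (hdef : ∀ v ∈ Vh, ⟪p, v⟫ + s p v = ⟪u, v⟫)
    (w : H) (hw : w ∈ Vh) :
    ‖u - p‖ ≤ 2 * ‖u - w‖ + Real.sqrt (s w w) := by
  have hv : p - w ∈ Vh := Vh.sub_mem hp hw
  have key : ⟪p, p - w⟫ + s p (p - w) = ⟪u, p - w⟫ := hdef _ hv
  set a := ‖p - w‖ with ha
  set C := ‖u - w‖ with hC
  set b := Real.sqrt (s p p) with hb
  set D := Real.sqrt (s w w) with hD
  have hb0 : 0 ≤ b := Real.sqrt_nonneg _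
  have hD0 : 0 ≤ D := Real.sqrt_nonneg _
  have hb2 : b ^ 2 = s p p := Real.sq_sqrt (hpsd p hp)
  have hD2 : D ^ 2 = s w w := Real.sq_sqrt (hpsd w hw)
  -- Cauchy–Schwarz for the semidefinite form s
  have hsq : (s p w) ^ 2 ≤ s p p * s w w := by
    have hdisc : ∀ t : ℝ, 0 ≤ s w w * (t * t) + (2 * s p w) * t + s p p := by
      intro t
      have h0 := hpsd (p + t • w) (Vh.add_mem hp (Vh.smul_mem t hw))
      have hsym := hsymm w hw p hp
      simp only [map_add, map_smul, LinearMap.add_apply, LinearMap.smul_apply,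
        smul_eq_mul] at h0
      rw [hsym] at h0
      ring_nf at h0 ⊢
      linarith
    have := discrim_le_zero hdisc
    rw [discrim] at this
    nlinarith [this]
  have hCS : s p w ≤ b * D := by
    have h1 : s p w ≤ Real.sqrt ((s p w) ^ 2) := by
      rw [Real.sqrt_sq_eq_abs]; exact le_abs_self _
    have h2 : Real.sqrt ((s p w) ^ 2) ≤ Real.sqrt (s p p * s w w) :=
      Real.sqrt_le_sqrt hsq
    calc s p w ≤ Real.sqrt (s p p * s w w) := h1.trans h2
      _ = b * D := Real.sqrt_mul (hpsd p hp) _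
  -- main energy identity
  have hinner : ⟪u - w, p - w⟫ ≤ C * a := by
    calc ⟪u - w, p - w⟫ ≤ ‖u - w‖ * ‖p - w‖ := real_inner_le_norm _ _
      _ = C * a := rfl
  have hmain : a ^ 2 + s p p - s p w ≤ C * a := by
    have h1 : a ^ 2 = ⟪p - w, p - w⟫ := (real_inner_self_eq_norm_sq _).symm
    have h2 : s p (p - w) = s p p - s p w := map_sub _ _ _
    have h3 : ⟪p - w, p - w⟫ = ⟪p, p - w⟫ - ⟪w, p - w⟫ := inner_sub_left _ _ _
    have h4 : ⟪u - w, p - w⟫ = ⟪u, p - w⟫ - ⟪w, p - w⟫ := inner_sub_left _ _ _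
    nlinarith [key, hinner]
  have hawC : a ≤ C + D := by
    by_contra hcon
    push_neg at hcon
    have hC0 : 0 ≤ C := norm_nonneg _
    nlinarith [sq_nonneg (2 * b - D), hmain, hCS, hb2]
  calc ‖u - p‖ = ‖(u - w) + (w - p)‖ := by rw [sub_add_sub_cancel]
    _ ≤ ‖u - w‖ + ‖w - p‖ := norm_add_le _ _
    _ = C + a := by rw [norm_sub_rev w p]
    _ ≤ C + (C + D) := by linarith
    _ = 2 * C + D := by ring
end
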